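/- Let θ ∈ (0,1], λ ∈ (0,1), Λ₀ > 0, and C > 0. Let (e_k), (ε_k), (d_k) be sequences of nonnegative real numbers such that for every k ≥ 0: (i) e_{k+1}² ≤ e_k² − d_k²; (ii) for every δ > 0, ε_{k+1}² ≤ (1 + δ)·(1 − λθ²)·ε_k² + (1 + δ⁻¹)·Λ₀·d_k²; and (iii) e_k ≤ C·ε_k. Then there exist γ > 0 and α ∈ (0,1), depending only on θ, λ, Λ₀ and C, such that for all k ≥ 0: e_{k+1}² + γ·ε_{k+1}² ≤ α²·(e_k² + γ·ε_k²). -/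

import Mathlib

/-!
Pythagoras makes `d_k²` the gain in the energy error, and the weight `γ = A⁻¹`, with `A` the
coefficient of `d_k²` in the estimator reduction, lets this gain absorb the perturbation term
exactly, leaving `e_{k+1}² + γ ε_{k+1}² ≤ e_k² + γ ρ ε_k²` with `ρ = (1 + δ)(1 - λθ²) < 1`
for small `δ`. The missing `γ (1 - ρ) ε_k²` is then split in halves, one of which dominates a
multiple of `e_k²` by the upper bound `e_k ≤ C ε_k`.
-/

lemma exists_pos_one_add_mul_lt_one {q : ℝ} (hq : q < 1) : ∃ δ > 0, (1 + δ) * q < 1 :=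
  ⟨(1 - q) / 2, by linarith,
    by nlinarith [mul_pos (sub_pos.2 hq) (by linarith : (0 : ℝ) < 2 - q)]⟩

lemma add_inv_mul_sq_le_of_pythagoras {e e' ε ε' d ρ A : ℝ} (hA : 0 < A)
    (hpyt : e' ^ 2 ≤ e ^ 2 - d ^ 2) (hred : ε' ^ 2 ≤ ρ * ε ^ 2 + A * d ^ 2) :
    e' ^ 2 + A⁻¹ * ε' ^ 2 ≤ e ^ 2 + A⁻¹ * (ρ * ε ^ 2) := by
  have hγred : A⁻¹ * ε' ^ 2 ≤ A⁻¹ * (ρ * ε ^ 2) + d ^ 2 := by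
    calc A⁻¹ * ε' ^ 2 ≤ A⁻¹ * (ρ * ε ^ 2 + A * d ^ 2) := by gcongr
      _ = A⁻¹ * (ρ * ε ^ 2) + d ^ 2 := by field_simp
  linarith

lemma exists_contraction_factor {ρ γ C : ℝ} (hρ : ρ < 1) (hγ : 0 < γ) (hC : 0 < C) :
    ∃ β, 0 < β ∧ β < 1 ∧
      ∀ E η : ℝ, 0 ≤ E → E ≤ C ^ 2 * η → E + γ * (ρ * η) ≤ β * (E + γ * η) := by
  set r := max ρ 0
  have hr0 : 0 ≤ r := le_max_right ρ 0
  have hr1 : r < 1 := max_lt hρ one_pos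
  have hκ : 0 < γ * (1 - r) / (2 * C ^ 2) := by
    have : 0 < 1 - r := by linarith
    positivity
  refine ⟨max (1 - γ * (1 - r) / (2 * C ^ 2)) ((1 + r) / 2),
    lt_max_of_lt_right (by linarith), max_lt (by linarith) (by linarith), fun E η hE hEη => ?_⟩
  have hη : 0 ≤ η := nonneg_of_mul_nonneg_right (hE.trans hEη) (by positivity)
  have hsplit : γ * (1 - r) / (2 * C ^ 2) * E ≤ γ * (1 - r) / 2 * η := by
    calc γ * (1 - r) / (2 * C ^ 2) * E ≤ γ * (1 - r) / (2 * C ^ 2) * (C ^ 2 * η) := by gcongr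
      _ = γ * (1 - r) / 2 * η := by field_simp
  calc E + γ * (ρ * η) ≤ E + γ * (r * η) := by gcongr; exact le_max_left ρ 0
    _ ≤ (1 - γ * (1 - r) / (2 * C ^ 2)) * E + (1 + r) / 2 * (γ * η) := by
      linear_combination hsplit
    _ ≤ max (1 - γ * (1 - r) / (2 * C ^ 2)) ((1 + r) / 2) * (E + γ * η) := by
      rw [mul_add]
      gcongr
      exacts [le_max_left _ _, le_max_right _ _]

theorem quasi_error_contraction_general
    (θ lam Λ₀ C : ℝ) (hθ0 : 0 < θ) (hlam0 : 0 < lam)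
    (hΛ₀ : 0 < Λ₀) (hC : 0 < C)
    (e ε d : ℕ → ℝ)
    (he : ∀ k, 0 ≤ e k)
    (hpyt : ∀ k, e (k + 1) ^ 2 ≤ e k ^ 2 - d k ^ 2)
    (hesred : ∀ k, ∀ δ : ℝ, 0 < δ →
      ε (k + 1) ^ 2 ≤ (1 + δ) * (1 - lam * θ ^ 2) * ε k ^ 2
        + (1 + δ⁻¹) * Λ₀ * d k ^ 2)
    (hub : ∀ k, e k ≤ C * ε k) :
    ∃ γ α : ℝ, 0 < γ ∧ 0 < α ∧ α < 1 ∧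
      ∀ k, e (k + 1) ^ 2 + γ * ε (k + 1) ^ 2 ≤ α ^ 2 * (e k ^ 2 + γ * ε k ^ 2) := by
  have hreduction : 1 - lam * θ ^ 2 < 1 := by
    have := mul_pos hlam0 (pow_pos hθ0 2)
    linarith
  obtain ⟨δ, hδ, hρ⟩ := exists_pos_one_add_mul_lt_one hreduction
  have hA : 0 < (1 + δ⁻¹) * Λ₀ := by positivity
  obtain ⟨β, hβ0, hβ1, hβ⟩ := exists_contraction_factor hρ (inv_pos.2 hA) hC
  refine ⟨((1 + δ⁻¹) * Λ₀)⁻¹, √β, inv_pos.2 hA, Real.sqrt_pos.2 hβ0,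
    (Real.sqrt_lt' one_pos).2 (by rwa [one_pow]), fun k => ?_⟩
  have hupper : e k ^ 2 ≤ C ^ 2 * ε k ^ 2 := by
    rw [← mul_pow]
    exact pow_le_pow_left₀ (he k) (hub k) 2
  rw [Real.sq_sqrt hβ0.le]
  exact (add_inv_mul_sq_le_of_pythagoras hA (hpyt k) (hesred k δ hδ)).trans
    (hβ _ _ (sq_nonneg _) hupper)

/-- Contraction of the quasi-error: under the Pythagoras identity, the perturbed
estimator reduction with Dörfler marking, and the a posteriori upper bound,
there are `γ > 0` and `α ∈ (0,1)` with
`e_{k+1}² + γ ε_{k+1}² ≤ α² (e_k² + γ ε_k²)` for all `k`. -/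
theorem quasi_error_contraction
    (θ lam Λ₀ C : ℝ) (hθ0 : 0 < θ) (hθ1 : θ ≤ 1) (hlam0 : 0 < lam) (hlam1 : lam < 1)
    (hΛ₀ : 0 < Λ₀) (hC : 0 < C)
    (e ε d : ℕ → ℝ)
    (he : ∀ k, 0 ≤ e k) (hε : ∀ k, 0 ≤ ε k) (hd : ∀ k, 0 ≤ d k)
    (hpyt : ∀ k, e (k + 1) ^ 2 ≤ e k ^ 2 - d k ^ 2)
    (hesred : ∀ k, ∀ δ : ℝ, 0 < δ →
      ε (k + 1) ^ 2 ≤ (1 + δ) * (1 - lam * θ ^ 2) * ε k ^ 2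
        + (1 + δ⁻¹) * Λ₀ * d k ^ 2)
    (hub : ∀ k, e k ≤ C * ε k) :
    ∃ γ α : ℝ, 0 < γ ∧ 0 < α ∧ α < 1 ∧
      ∀ k, e (k + 1) ^ 2 + γ * ε (k + 1) ^ 2 ≤ α ^ 2 * (e k ^ 2 + γ * ε k ^ 2) :=
  quasi_error_contraction_general θ lam Λ₀ C hθ0 hlam0 hΛ₀ hC e ε d he hpyt hesred hub
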